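/- arXiv:2112.00072 — 2 statements merged into one kernel-verified Lean document; each statement's English description precedes it below -/
import Mathlib

section
/- Let P be a Borel probability measure on Ω = C([0,∞), J) with the local uniform topology, let x₀ be in the interior of J, and for b > x₀ let τ⁺_b(ω) = inf{s : ω(s) ≥ b} and σ⁺_b(ω) = inf{s : ω(s) > b}. Then the set {b ∈ (x₀, sup J) : P(τ⁺_b ≠ σ⁺_b) > 0} is at most countable. -/
open Filter Topology NNReal ENNReal MeasureTheory

noncomputable instance (J : Set ℝ) :
    MeasurableSpace {ω : C(ℝ≥0, ℝ) // ∀ t, ω t ∈ J} := borel _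

instance (J : Set ℝ) : BorelSpace {ω : C(ℝ≥0, ℝ) // ∀ t, ω t ∈ J} := ⟨rfl⟩

/-!
If `τ⁺_b(ω) < σ⁺_b(ω)`, the path reaches `b` before `σ⁺_b(ω)` and does not exceed `b`
before that time, so for every rational `q` strictly between the two times the maximum of `ω`
on `[0, q]` is exactly `b`. For fixed `q` this maximum is a measurable function of `ω`, and a
real random variable has only countably many atoms; a countable union over `q` gives the claim.
-/

open Set

section FirstPassage

variable {α : Type*} [LinearOrder α]

noncomputable def firstPassageGE (b : α) (f : ℝ≥0 → α) : ℝ≥0∞ :=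
  ⨅ s ∈ {s : ℝ≥0 | b ≤ f s}, (s : ℝ≥0∞)

noncomputable def firstPassageGT (b : α) (f : ℝ≥0 → α) : ℝ≥0∞ :=
  ⨅ s ∈ {s : ℝ≥0 | b < f s}, (s : ℝ≥0∞)

theorem firstPassageGE_le_firstPassageGT (b : α) (f : ℝ≥0 → α) :
    firstPassageGE b f ≤ firstPassageGT b f :=
  biInf_mono fun _ hs => le_of_lt hs

theorem le_of_lt_firstPassageGT {b : α} {f : ℝ≥0 → α} {s : ℝ≥0}
    (hs : (s : ℝ≥0∞) < firstPassageGT b f) : f s ≤ b :=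
  not_lt.1 fun hbs =>
    (biInf_le (fun t : ℝ≥0 => (t : ℝ≥0∞)) (show s ∈ {t | b < f t} from hbs)).not_gt hs

theorem exists_rat_isGreatest_image_Iic_of_ne {b : α} {f : ℝ≥0 → α}
    (h : firstPassageGE b f ≠ firstPassageGT b f) :
    ∃ q : ℚ, IsGreatest (f '' Iic (Real.toNNReal q)) b := by
  obtain ⟨q, -, hτq, hqσ⟩ :=
    ENNReal.lt_iff_exists_rat_btwn.1 ((firstPassageGE_le_firstPassageGT b f).lt_of_ne h)
  obtain ⟨s, hs⟩ := iInf_lt_iff.1 hτq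
  obtain ⟨hbs, hsq⟩ := iInf_lt_iff.1 hs
  have hle : ∀ t ≤ Real.toNNReal q, f t ≤ b := fun t ht =>
    le_of_lt_firstPassageGT ((ENNReal.coe_le_coe.2 ht).trans_lt hqσ)
  have hsq' : s ≤ Real.toNNReal q := (ENNReal.coe_lt_coe.1 hsq).le
  refine ⟨q, ⟨s, hsq', (hle s hsq').antisymm hbs⟩, ?_⟩
  rintro _ ⟨t, ht, rfl⟩
  exact hle t ht

end FirstPassage

theorem upperSemicontinuous_sSup_image {X α : Type*} [TopologicalSpace X]
    [ConditionallyCompleteLinearOrder α] [TopologicalSpace α] [ClosedIciTopology α]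
    {K : Set X} (hK : IsCompact K) (hK₀ : K.Nonempty) :
    UpperSemicontinuous fun f : C(X, α) => sSup (f '' K) := by
  refine upperSemicontinuous_iff_isOpen_preimage.2 fun c => ?_
  have hpre : (fun f : C(X, α) => sSup (f '' K)) ⁻¹' Iio c =
      {f : C(X, α) | MapsTo f K (Iio c)} := by
    ext f
    exact hK.sSup_lt_iff_of_continuous hK₀ f.continuous.continuousOn c
  rw [hpre]
  exact ContinuousMap.isOpen_setOfPred_mapsTo hK isOpen_Iio

theorem measurable_sSup_image_Iic (J : Set ℝ) (t : ℝ≥0) :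
    Measurable fun ω : {ω : C(ℝ≥0, ℝ) // ∀ t, ω t ∈ J} => sSup (ω.1 '' Iic t) :=
  ((upperSemicontinuous_sSup_image (Icc_bot (a := t) ▸ isCompact_Icc) nonempty_Iic).comp
    continuous_subtype_val).measurable

theorem stmt4_general (J : Set ℝ) (P : Measure {ω : C(ℝ≥0, ℝ) // ∀ t, ω t ∈ J})
    [IsProbabilityMeasure P] (x₀ : ℝ) :
    Set.Countable {b : ℝ | x₀ < b ∧ (¬ BddAbove J ∨ b < sSup J) ∧
      0 < P {ω | (⨅ s ∈ {s : ℝ≥0 | b ≤ ω.1 s}, (s : ℝ≥0∞)) ≠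
        ⨅ s ∈ {s : ℝ≥0 | b < ω.1 s}, (s : ℝ≥0∞)}} := by
  let maxUpTo (q : ℚ) (ω : {ω : C(ℝ≥0, ℝ) // ∀ t, ω t ∈ J}) : ℝ :=
    sSup (ω.1 '' Iic (Real.toNNReal q))
  have hatoms : ∀ q, {b : ℝ | 0 < P {ω | maxUpTo q ω = b}}.Countable := fun q =>
    Measure.countable_meas_level_set_pos (measurable_sSup_image_Iic J _)
  refine (countable_iUnion hatoms).mono ?_
  rintro b ⟨-, -, hpos⟩
  have hsub : {ω : {ω : C(ℝ≥0, ℝ) // ∀ t, ω t ∈ J} |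
      firstPassageGE b ω.1 ≠ firstPassageGT b ω.1} ⊆ ⋃ q, {ω | maxUpTo q ω = b} :=
    fun ω hω =>
      let ⟨q, hq⟩ := exists_rat_isGreatest_image_Iic_of_ne hω
      mem_iUnion.2 ⟨q, hq.csSup_eq⟩
  obtain ⟨q, hq⟩ : ∃ q, P {ω | maxUpTo q ω = b} ≠ 0 := by
    by_contra! hnull
    exact hpos.ne' (measure_mono_null hsub (measure_iUnion_null hnull))
  exact mem_iUnion.2 ⟨q, pos_iff_ne_zero.2 hq⟩

/-- For a Borel probability measure `P` on `Ω = C([0,∞), J)` and `x₀` in the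
interior of `J`, the set of levels `b ∈ (x₀, sup J)` such that
`P(τ⁺_b ≠ σ⁺_b) > 0` is at most countable, where `τ⁺_b(ω) = inf {s : ω(s) ≥ b}` and
`σ⁺_b(ω) = inf {s : ω(s) > b}` (values in `[0,∞]`, `inf ∅ = ∞`). -/
theorem stmt4 (J : Set ℝ) (P : Measure {ω : C(ℝ≥0, ℝ) // ∀ t, ω t ∈ J})
    [IsProbabilityMeasure P] (x₀ : ℝ) (hx : x₀ ∈ interior J) :
    Set.Countable {b : ℝ | x₀ < b ∧ (¬ BddAbove J ∨ b < sSup J) ∧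
      0 < P {ω | (⨅ s ∈ {s : ℝ≥0 | b ≤ ω.1 s}, (s : ℝ≥0∞)) ≠
        ⨅ s ∈ {s : ℝ≥0 | b < ω.1 s}, (s : ℝ≥0∞)}} :=
  stmt4_general J P x₀
end

section
/- Let μ^n, μ^0 be locally finite Borel measures on an open interval J° = (l,r) ⊆ ℝ. Then μ^n → μ^0 vaguely (i.e. ∫ f dμ^n → ∫ f dμ^0 for all continuous f with compact support in J°) if and only if for all a < b with [a,b] ⊂ J° outside a countable exceptional set and all f ∈ C_c(J°), one has ∫ G_{(a,b)}(x,y) f(y) μ^n(dy) → ∫ G_{(a,b)}(x,y) f(y) μ^0(dy) for some fixed x ∈ (a,b), where G_{(a,b)}(x,y) = (x∧y − a)(b − x∨y)/(b−a) is the Green function of (a,b). -/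
/-!
For `x ∈ [a,b]` the function `G_{(a,b)}(x,·)` is continuous, nonnegative on `[a,b]` and
nonpositive outside, so `1_{[a,b]} G(x,·) f = G(x,·)⁺ f` is again a test function; this gives the
forward direction. Conversely, a test function `f` is supported in some `(a,b)` with `[a,b] ⊆ J°`
and `(a,b)` off the countable exceptional set (fix `b` first, then pick `a` off the countable
section `{a | (a,b) ∈ C}`); as `G(x,·) > 0` on `(a,b)`, `f = G(x,·) · (f / G(x,·))` where
`f / G(x,·)` is a test function.
-/

open Filter Topology MeasureTheory ENNReal

/-- The Green function of the interval `(a,b)`: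
`G_{(a,b)}(x,y) = (x ∧ y − a)(b − x ∨ y)/(b − a)`. -/
noncomputable def greenFn (a b x y : ℝ) : ℝ := (min x y - a) * (b - max x y) / (b - a)

open Set

section GreenFn

variable {a b x y : ℝ}

lemma continuous_greenFn (a b x : ℝ) : Continuous (greenFn a b x) := by
  unfold greenFn
  fun_prop

lemma greenFn_nonneg (hx : x ∈ Icc a b) (hy : y ∈ Icc a b) : 0 ≤ greenFn a b x y := by
  unfold greenFn
  have hmin : a ≤ min x y := le_min hx.1 hy.1
  have hmax : max x y ≤ b := max_le hx.2 hy.2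
  apply div_nonneg (mul_nonneg _ _) <;> linarith [hx.1, hx.2]

lemma greenFn_nonpos_of_notMem (hx : x ∈ Icc a b) (hy : y ∉ Icc a b) : greenFn a b x y ≤ 0 := by
  unfold greenFn
  have hab : 0 ≤ b - a := by linarith [hx.1, hx.2]
  rcases not_and_or.mp hy with hya | hyb
  · rw [min_eq_right (by linarith [hx.1]), max_eq_left (by linarith [hx.1])]
    exact div_nonpos_of_nonpos_of_nonneg (mul_nonpos_of_nonpos_of_nonneg (by linarith)
      (by linarith [hx.2])) hab
  · rw [min_eq_left (by linarith [hx.2]), max_eq_right (by linarith [hx.2])]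
    exact div_nonpos_of_nonpos_of_nonneg (mul_nonpos_of_nonneg_of_nonpos (by linarith [hx.1])
      (by linarith)) hab

lemma greenFn_pos (hx : x ∈ Ioo a b) (hy : y ∈ Ioo a b) : 0 < greenFn a b x y := by
  unfold greenFn
  have hmin : a < min x y := lt_min hx.1 hy.1
  have hmax : max x y < b := max_lt hx.2 hy.2
  apply div_pos (mul_pos _ _) <;> linarith [hx.1, hx.2]

lemma indicator_Icc_greenFn (hx : x ∈ Icc a b) :
    (Icc a b).indicator (greenFn a b x) = fun y => max (greenFn a b x y) 0 := by
  funext y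
  by_cases hy : y ∈ Icc a b
  · rw [indicator_of_mem hy, max_eq_left (greenFn_nonneg hx hy)]
  · rw [indicator_of_notMem hy, max_eq_right (greenFn_nonpos_of_notMem hx hy)]

lemma setIntegral_Icc_greenFn_mul (hx : x ∈ Icc a b) (ν : Measure ℝ) (f : ℝ → ℝ) :
    ∫ y in Icc a b, greenFn a b x y * f y ∂ν = ∫ y, max (greenFn a b x y) 0 * f y ∂ν := by
  rw [← integral_indicator measurableSet_Icc]
  simp only [indicator_mul_left, indicator_Icc_greenFn hx]

lemma exists_continuous_greenFn_mul_eq {f : ℝ → ℝ} (hx : x ∈ Ioo a b) (hf : Continuous f)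
    (hfab : tsupport f ⊆ Ioo a b) :
    ∃ h : ℝ → ℝ, Continuous h ∧ tsupport h ⊆ tsupport f ∧ ∀ y, greenFn a b x y * h y = f y := by
  have hG : ∀ y ∈ Ioo a b, greenFn a b x y ≠ 0 := fun y hy => (greenFn_pos hx hy).ne'
  refine ⟨fun y => f y * (greenFn a b x y)⁻¹, ?_, tsupport_mul_subset_left, fun y => ?_⟩
  · refine ContinuousOn.continuous_of_tsupport_subset ?_ isOpen_Ioo
      (tsupport_mul_subset_left.trans hfab)
    exact hf.continuousOn.mul ((continuous_greenFn a b x).continuousOn.inv₀ hG)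
  · by_cases hfy : f y = 0
    · simp [hfy]
    · rw [mul_comm, mul_assoc, inv_mul_cancel₀ (hG y (hfab (subset_tsupport f hfy))), mul_one]

end GreenFn

lemma exists_Icc_subset_notMem_of_countable {J K : Set ℝ} (hJ : IsOpen J) (hJc : J.OrdConnected)
    (hK : IsCompact K) (hKne : K.Nonempty) (hKJ : K ⊆ J) {C : Set (ℝ × ℝ)} (hC : C.Countable) :
    ∃ a b, a < b ∧ K ⊆ Ioo a b ∧ Icc a b ⊆ J ∧ (a, b) ∉ C := by
  obtain ⟨l, hlm, hlJ⟩ := exists_Ioc_subset_of_mem_nhds (hJ.mem_nhds (hKJ (hK.sInf_mem hKne)))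
    (exists_lt _)
  obtain ⟨u, hMu, huJ⟩ := exists_Ico_subset_of_mem_nhds (hJ.mem_nhds (hKJ (hK.sSup_mem hKne)))
    (exists_gt _)
  obtain ⟨b, hMb, hbu⟩ := exists_between hMu
  have hsection : {a | (a, b) ∈ C}.Countable :=
    (hC.image Prod.fst).mono fun a ha => mem_image_of_mem Prod.fst (show (a, b) ∈ C from ha)
  obtain ⟨a, haC, hla, ham⟩ := (hsection.dense_compl ℝ).exists_between hlm
  have hKab : K ⊆ Ioo a b := fun y hy =>
    ⟨ham.trans_le (csInf_le hK.bddBelow hy), (le_csSup hK.bddAbove hy).trans_lt hMb⟩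
  obtain ⟨y, hy⟩ := hKne
  exact ⟨a, b, (hKab hy).1.trans (hKab hy).2, hKab,
    hJc.out (hlJ ⟨hla, ham.le⟩) (huJ ⟨hMb.le, hbu⟩), haC⟩

theorem stmt12_general (J : Set ℝ) (hJopen : IsOpen J) (hJconn : J.OrdConnected)
    (μ : ℕ → Measure ℝ) (μ0 : Measure ℝ) :
    (∀ f : ℝ → ℝ, Continuous f → HasCompactSupport f → tsupport f ⊆ J →
        Tendsto (fun n => ∫ y, f y ∂(μ n)) atTop (nhds (∫ y, f y ∂μ0))) ↔
      ∃ C : Set (ℝ × ℝ), C.Countable ∧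
        ∀ a b : ℝ, a < b → Set.Icc a b ⊆ J → (a, b) ∉ C →
          ∃ x ∈ Set.Ioo a b, ∀ f : ℝ → ℝ, Continuous f → HasCompactSupport f →
            tsupport f ⊆ J →
            Tendsto (fun n => ∫ y in Set.Icc a b, greenFn a b x y * f y ∂(μ n)) atTop
              (nhds (∫ y in Set.Icc a b, greenFn a b x y * f y ∂μ0)) := by
  constructor
  · intro hvague
    refine ⟨∅, countable_empty, fun a b hab _ _ => ⟨(a + b) / 2, ⟨by linarith, by linarith⟩,
      fun f hf hfc hfJ => ?_⟩⟩
    have hx : (a + b) / 2 ∈ Icc a b := ⟨by linarith, by linarith⟩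
    simp only [setIntegral_Icc_greenFn_mul hx]
    exact hvague _ (((continuous_greenFn a b _).max continuous_const).mul hf) hfc.mul_left
      (tsupport_mul_subset_right.trans hfJ)
  · rintro ⟨C, hC, hgreen⟩ f hf hfc hfJ
    rcases (tsupport f).eq_empty_or_nonempty with hK | hK
    · simp [tsupport_eq_empty_iff.mp hK]
    obtain ⟨a, b, hab, hfab, habJ, habC⟩ :=
      exists_Icc_subset_notMem_of_countable hJopen hJconn hfc hK hfJ hC
    obtain ⟨x, hx, hconv⟩ := hgreen a b hab habJ habC
    obtain ⟨h, hh, hhf, hGh⟩ := exists_continuous_greenFn_mul_eq hx hf hfab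
    have hfIcc : ∀ y ∉ Icc a b, f y = 0 := fun y hy =>
      image_eq_zero_of_notMem_tsupport fun hy' => hy (Ioo_subset_Icc_self (hfab hy'))
    have hint : ∀ ν : Measure ℝ,
        ∫ y in Icc a b, greenFn a b x y * h y ∂ν = ∫ y, f y ∂ν := fun ν => by
      simp only [hGh, setIntegral_eq_integral_of_forall_compl_eq_zero hfIcc]
    simpa only [hint] using
      hconv h hh (hfc.of_isClosed_subset (isClosed_tsupport h) hhf) (hhf.trans hfJ)

/-- For locally finite Borel measures `μ^n, μ^0` on an open interval
`J° ⊆ ℝ`, vague convergence `μ^n → μ^0` is equivalent to convergence of the integrals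
`∫ G_{(a,b)}(x,y) f(y) μ^n(dy) → ∫ G_{(a,b)}(x,y) f(y) μ^0(dy)` for some fixed `x ∈ (a,b)`,
for all `a < b` with `[a,b] ⊂ J°` outside a countable exceptional set, and all
`f ∈ C_c(J°)`. -/
theorem stmt12 (J : Set ℝ) (hJopen : IsOpen J) (hJconn : J.OrdConnected)
    (μ : ℕ → Measure ℝ) (μ0 : Measure ℝ)
    (hloc : ∀ n, ∀ K : Set ℝ, K ⊆ J → IsCompact K → μ n K < ⊤)
    (hloc0 : ∀ K : Set ℝ, K ⊆ J → IsCompact K → μ0 K < ⊤) :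
    (∀ f : ℝ → ℝ, Continuous f → HasCompactSupport f → tsupport f ⊆ J →
        Tendsto (fun n => ∫ y, f y ∂(μ n)) atTop (nhds (∫ y, f y ∂μ0))) ↔
      ∃ C : Set (ℝ × ℝ), C.Countable ∧
        ∀ a b : ℝ, a < b → Set.Icc a b ⊆ J → (a, b) ∉ C →
          ∃ x ∈ Set.Ioo a b, ∀ f : ℝ → ℝ, Continuous f → HasCompactSupport f →
            tsupport f ⊆ J →
            Tendsto (fun n => ∫ y in Set.Icc a b, greenFn a b x y * f y ∂(μ n)) atTop
              (nhds (∫ y in Set.Icc a b, greenFn a b x y * f y ∂μ0)) :=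
  stmt12_general J hJopen hJconn μ μ0
end
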